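/- Let c ≥ 1 and a > 0 be fixed, and set κ = 3/(4c) − 1 and ω_λ(x) := (1 + (λ^κ | |x|_c^c − λ|)^{10})^{−1} for x ∈ ℝ³ and λ ≥ 1, where |x|_c^c := |x₁|^c + |x₂|^c + |x₃|^c. Then there is a constant C = C(c,a) ≥ 1 such that C^{−1} ω_λ(t+γ) ≤ ω_λ(t) ≤ C ω_λ(t+γ) for all λ ≥ 1 and all t, γ ∈ ℝ³ with max(|γ₁|,|γ₂|,|γ₃|) ≤ a. -/

import Mathlib

open Real

/-- The weight `ω_λ(x) = (1 + (λ^κ | |x|_c^c − λ|)^{10})⁻¹` with `κ = 3/(4c) − 1`. -/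
noncomputable def omegaWeight (c lam : ℝ) (x : ℝ × ℝ × ℝ) : ℝ :=
  (1 + (lam ^ (3 / (4 * c) - 1) *
      |(|x.1| ^ c + |x.2.1| ^ c + |x.2.2| ^ c) - lam|) ^ 10)⁻¹

/-!
Write `u_λ(x) = λ^κ | |x|_c^c − λ|`, so that `ω_λ = (1 + u_λ^10)⁻¹`. It suffices to show
`u_λ(t + γ) ≤ K (1 + u_λ(t))`, since `γ ↦ -γ` gives the reverse bound and `(1 + v)^10 ≲ 1 + v^10`.
By the mean value theorem, shifting a coordinate `x` by at most `a` changes `|x|^c` by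
`≲ max(1, |x|)^{c-1}`. Near the shell `|t|_c^c ≤ 2λ` we have `max(1, |tᵢ|)^{c-1} ≲ λ^{1 - 1/c}`,
and `λ^κ λ^{1 - 1/c} = λ^{-1/(4c)} ≤ 1`; far from it, `max(1, |tᵢ|)^{c-1} ≤ 1 + |t|_c^c ≲ | |t|_c^c − λ|`.
-/

lemma abs_rpow_sub_rpow_le {c x y : ℝ} (hc : 1 ≤ c) (hx : 0 ≤ x) (hy : 0 ≤ y) :
    |x ^ c - y ^ c| ≤ c * max x y ^ (c - 1) * |x - y| := by
  wlog hyx : y ≤ x generalizing x y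
  · rw [abs_sub_comm, max_comm, abs_sub_comm x]
    exact this hy hx (le_of_not_ge hyx)
  rcases hyx.eq_or_lt with rfl | hlt
  · simp
  obtain ⟨ξ, hξ, hslope⟩ := exists_hasDerivAt_eq_slope (fun s : ℝ => s ^ c)
    (fun s => c * s ^ (c - 1)) hlt
    (continuous_id.rpow_const fun _ => Or.inr (by linarith)).continuousOn
    (fun s _ => hasDerivAt_rpow_const (Or.inr hc))
  rw [eq_div_iff (sub_ne_zero.2 hlt.ne')] at hslope
  rw [max_eq_left hyx, abs_of_nonneg (sub_nonneg.2 hyx),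
    abs_of_nonneg (sub_nonneg.2 (rpow_le_rpow hy hyx (by linarith))), ← hslope]
  have hξx : ξ ^ (c - 1) ≤ x ^ (c - 1) := rpow_le_rpow (hy.trans hξ.1.le) hξ.2.le (by linarith)
  exact mul_le_mul_of_nonneg_right (mul_le_mul_of_nonneg_left hξx (by linarith)) (sub_nonneg.2 hyx)

lemma abs_abs_add_rpow_sub_abs_rpow_le {c a x g : ℝ} (hc : 1 ≤ c) (hg : |g| ≤ a) :
    |(|x + g|) ^ c - |x| ^ c| ≤ c * a * (1 + a) ^ (c - 1) * max 1 |x| ^ (c - 1) := by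
  have ha : 0 ≤ a := (abs_nonneg g).trans hg
  have hmax : max |x + g| |x| ≤ (1 + a) * max 1 |x| := by
    have h1 := le_max_left 1 |x|
    have h2 := le_max_right 1 |x|
    refine max_le ?_ (by nlinarith)
    nlinarith [abs_add_le x g]
  calc |(|x + g|) ^ c - |x| ^ c|
      ≤ c * max |x + g| |x| ^ (c - 1) * |(|x + g|) - (|x|)| :=
        abs_rpow_sub_rpow_le hc (abs_nonneg _) (abs_nonneg _)
    _ ≤ c * ((1 + a) * max 1 |x|) ^ (c - 1) * a := by
        gcongr
        exact (abs_abs_sub_abs_le_abs_sub _ _).trans (by simpa using hg)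
    _ = c * a * (1 + a) ^ (c - 1) * max 1 |x| ^ (c - 1) := by
        rw [mul_rpow (by linarith) (by positivity)]
        ring

lemma max_one_abs_rpow_le (c x : ℝ) : max 1 |x| ^ c ≤ 1 + |x| ^ c := by
  rcases max_choice 1 |x| with h | h <;> rw [h]
  · simpa using rpow_nonneg (abs_nonneg x) c
  · linarith

lemma rpow_kappa_mul_rpow_sub_one_le_three {c lam R : ℝ} (hc : 1 ≤ c) (hlam : 1 ≤ lam)
    (hR : 0 ≤ R) (hRc : R ^ c ≤ 3 * lam) :
    lam ^ (3 / (4 * c) - 1) * R ^ (c - 1) ≤ 3 := by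
  have hc0 : 0 < c := by linarith
  set p := (c - 1) / c
  have hp0 : 0 ≤ p := div_nonneg (by linarith) hc0.le
  have hRp : R ^ (c - 1) = (R ^ c) ^ p := by
    rw [← rpow_mul hR]
    congr 1
    simp only [p]
    field_simp
  have hthree : (3 : ℝ) ^ p ≤ 3 := by
    simpa using rpow_le_rpow_of_exponent_le (by norm_num : (1 : ℝ) ≤ 3)
      (div_le_one_of_le₀ (by linarith) hc0.le)
  have hlam_exp : lam ^ (3 / (4 * c) - 1) * lam ^ p ≤ 1 := by
    rw [← rpow_add (by linarith)]
    refine rpow_le_one_of_one_le_of_nonpos hlam ?_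
    have : 3 / (4 * c) - 1 + p = -(1 / (4 * c)) := by
      simp only [p]
      field_simp
      ring
    rw [this, neg_nonpos]
    positivity
  calc lam ^ (3 / (4 * c) - 1) * R ^ (c - 1)
      ≤ lam ^ (3 / (4 * c) - 1) * (3 ^ p * lam ^ p) := by
        rw [hRp, ← mul_rpow (by norm_num) (by linarith)]
        gcongr
    _ = 3 ^ p * (lam ^ (3 / (4 * c) - 1) * lam ^ p) := by ring
    _ ≤ 3 * 1 := by gcongr
    _ = 3 := by ring

lemma rpow_kappa_mul_rpow_sub_one_le {c lam N R : ℝ} (hc : 1 ≤ c) (hlam : 1 ≤ lam)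
    (hR : 1 ≤ R) (hRN : R ^ c ≤ 1 + N) :
    lam ^ (3 / (4 * c) - 1) * R ^ (c - 1) ≤ 3 * (1 + lam ^ (3 / (4 * c) - 1) * |N - lam|) := by
  have hm : 0 < lam ^ (3 / (4 * c) - 1) := rpow_pos_of_pos (by linarith) _
  rcases le_total N (2 * lam) with hnear | hfar
  · have := rpow_kappa_mul_rpow_sub_one_le_three (R := R) hc hlam (by linarith) (by linarith)
    nlinarith [abs_nonneg (N - lam)]
  · have hRN' : R ^ (c - 1) ≤ 3 * |N - lam| := by
      rw [abs_of_nonneg (by linarith)]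
      linarith [rpow_le_rpow_of_exponent_le hR (by linarith : c - 1 ≤ c)]
    nlinarith

lemma rpow_kappa_mul_abs_abs_add_rpow_sub_le {c a lam N x g : ℝ} (hc : 1 ≤ c) (hlam : 1 ≤ lam)
    (hg : |g| ≤ a) (hx : |x| ^ c ≤ N) :
    lam ^ (3 / (4 * c) - 1) * |(|x + g|) ^ c - |x| ^ c| ≤
      3 * (c * a * (1 + a) ^ (c - 1)) * (1 + lam ^ (3 / (4 * c) - 1) * |N - lam|) := by
  have ha : 0 ≤ a := (abs_nonneg g).trans hg
  have hm : 0 < lam ^ (3 / (4 * c) - 1) := rpow_pos_of_pos (by linarith) _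
  have hR := rpow_kappa_mul_rpow_sub_one_le hc hlam (le_max_left 1 |x|)
    (N := N) (by linarith [max_one_abs_rpow_le c x])
  calc lam ^ (3 / (4 * c) - 1) * |(|x + g|) ^ c - |x| ^ c|
      ≤ lam ^ (3 / (4 * c) - 1) * (c * a * (1 + a) ^ (c - 1) * max 1 |x| ^ (c - 1)) := by
        gcongr
        exact abs_abs_add_rpow_sub_abs_rpow_le hc hg
    _ = c * a * (1 + a) ^ (c - 1) * (lam ^ (3 / (4 * c) - 1) * max 1 |x| ^ (c - 1)) := by ring
    _ ≤ c * a * (1 + a) ^ (c - 1) * (3 * (1 + lam ^ (3 / (4 * c) - 1) * |N - lam|)) := by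
        have : 0 ≤ c * a * (1 + a) ^ (c - 1) := by
          have : 0 ≤ c := by linarith
          positivity
        gcongr
    _ = _ := by ring

noncomputable def sumAbsRpow (c : ℝ) (x : ℝ × ℝ × ℝ) : ℝ :=
  |x.1| ^ c + |x.2.1| ^ c + |x.2.2| ^ c

noncomputable def shellDist (c lam : ℝ) (x : ℝ × ℝ × ℝ) : ℝ :=
  lam ^ (3 / (4 * c) - 1) * |sumAbsRpow c x - lam|

lemma omegaWeight_eq (c lam : ℝ) (x : ℝ × ℝ × ℝ) :
    omegaWeight c lam x = (1 + shellDist c lam x ^ 10)⁻¹ :=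
  rfl

lemma shellDist_nonneg {c lam : ℝ} (hlam : 0 ≤ lam) (x : ℝ × ℝ × ℝ) : 0 ≤ shellDist c lam x :=
  mul_nonneg (rpow_nonneg hlam _) (abs_nonneg _)

lemma shellDist_add_le {c a lam : ℝ} (hc : 1 ≤ c) (hlam : 1 ≤ lam) {t γ : ℝ × ℝ × ℝ}
    (hγ : max |γ.1| (max |γ.2.1| |γ.2.2|) ≤ a) :
    shellDist c lam (t + γ) ≤
      (1 + 9 * (c * a * (1 + a) ^ (c - 1))) * (1 + shellDist c lam t) := by
  simp only [max_le_iff] at hγ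
  obtain ⟨h₁, h₂, h₃⟩ := hγ
  have hN : 0 ≤ |t.1| ^ c ∧ 0 ≤ |t.2.1| ^ c ∧ 0 ≤ |t.2.2| ^ c :=
    ⟨rpow_nonneg (abs_nonneg _) c, rpow_nonneg (abs_nonneg _) c, rpow_nonneg (abs_nonneg _) c⟩
  have e₁ := rpow_kappa_mul_abs_abs_add_rpow_sub_le (N := sumAbsRpow c t) (x := t.1) hc hlam h₁
    (by simp only [sumAbsRpow]; linarith)
  have e₂ := rpow_kappa_mul_abs_abs_add_rpow_sub_le (N := sumAbsRpow c t) (x := t.2.1) hc hlam h₂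
    (by simp only [sumAbsRpow]; linarith)
  have e₃ := rpow_kappa_mul_abs_abs_add_rpow_sub_le (N := sumAbsRpow c t) (x := t.2.2) hc hlam h₃
    (by simp only [sumAbsRpow]; linarith)
  have htri : |sumAbsRpow c (t + γ) - lam| ≤ |sumAbsRpow c t - lam| +
      |(|t.1 + γ.1|) ^ c - |t.1| ^ c| + |(|t.2.1 + γ.2.1|) ^ c - |t.2.1| ^ c| +
      |(|t.2.2 + γ.2.2|) ^ c - |t.2.2| ^ c| := by
    have hsplit : sumAbsRpow c (t + γ) - lam = (sumAbsRpow c t - lam) +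
        ((|t.1 + γ.1|) ^ c - |t.1| ^ c) + ((|t.2.1 + γ.2.1|) ^ c - |t.2.1| ^ c) +
        ((|t.2.2 + γ.2.2|) ^ c - |t.2.2| ^ c) := by
      simp only [sumAbsRpow, Prod.fst_add, Prod.snd_add]
      ring
    rw [hsplit]
    exact (abs_add_le _ _).trans (add_le_add_left (abs_add_three _ _ _) _)
  have hm : 0 < lam ^ (3 / (4 * c) - 1) := rpow_pos_of_pos (by linarith) _
  unfold shellDist
  have := mul_le_mul_of_nonneg_left htri hm.le
  nlinarith

lemma one_add_pow_le_mul_one_add_pow {K u v : ℝ} (n : ℕ) (hK : 0 ≤ K) (hu : 0 ≤ u) (hv : 0 ≤ v)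
    (h : u ≤ K * (1 + v)) :
    1 + u ^ n ≤ (1 + 2 ^ (n - 1) * K ^ n) * (1 + v ^ n) := by
  have hun : u ^ n ≤ K ^ n * (1 + v) ^ n := by
    rw [← mul_pow]
    exact pow_le_pow_left₀ hu h n
  have hvn : (1 + v) ^ n ≤ 2 ^ (n - 1) * (1 + v ^ n) := by
    simpa using add_pow_le zero_le_one hv n
  have := mul_le_mul_of_nonneg_left hvn (pow_nonneg hK n)
  nlinarith [pow_nonneg hv n]

/-- Lemma `kernel`. For `c ≥ 1` and `a > 0`,
`ω_λ(t) ≃ ω_λ(t+γ)` uniformly in `λ ≥ 1` and `|γ|_∞ ≤ a`. -/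
theorem omegaWeight_comparable (c a : ℝ) (hc : 1 ≤ c) (ha : 0 < a) :
    ∃ C : ℝ, 1 ≤ C ∧ ∀ lam : ℝ, 1 ≤ lam → ∀ t γ : ℝ × ℝ × ℝ,
      max |γ.1| (max |γ.2.1| |γ.2.2|) ≤ a →
      C⁻¹ * omegaWeight c lam (t + γ) ≤ omegaWeight c lam t ∧
        omegaWeight c lam t ≤ C * omegaWeight c lam (t + γ) := by
  set K := 1 + 9 * (c * a * (1 + a) ^ (c - 1))
  have hK : 0 ≤ K := by
    have : 0 ≤ c := by linarith
    positivity
  refine ⟨1 + 2 ^ 9 * K ^ 10, le_add_of_nonneg_right (by positivity),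
    fun lam hlam t γ hγ => ?_⟩
  have hlam0 : 0 ≤ lam := by linarith
  have hforth := shellDist_add_le hc hlam (t := t) hγ
  have hback : shellDist c lam t ≤ K * (1 + shellDist c lam (t + γ)) := by
    simpa using shellDist_add_le hc hlam (t := t + γ) (γ := -γ) (by simpa using hγ)
  have hA := one_add_pow_le_mul_one_add_pow 10 hK (shellDist_nonneg hlam0 _)
    (shellDist_nonneg hlam0 _) hforth
  have hB := one_add_pow_le_mul_one_add_pow 10 hK (shellDist_nonneg hlam0 _)
    (shellDist_nonneg hlam0 _) hback
  rw [omegaWeight_eq, omegaWeight_eq, ← mul_inv]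
  refine ⟨inv_anti₀ (by positivity) hB, ?_⟩
  rw [← div_eq_mul_inv, le_div_iff₀ (by positivity), inv_mul_le_iff₀ (by positivity), mul_comm]
  exact hA
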